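/- arXiv:2212.02700 — 2 statements merged into one kernel-verified Lean document; each statement's English description precedes it below -/
import Mathlib

section
/- For each t with 0 ≤ t ≤ ⌊k/2⌋, the sequence (t,t), (t,t+1), ..., (t,k−t), (t+1,k−t), ..., (k−t,k−t) is a saturated chain in L(2,k) that is symmetric, i.e., the ranks of its first and last elements sum to 2k. -/
/-- The `s`-th element of the chain
`(t,t) → (t,t+1) → ⋯ → (t,k−t) → (t+1,k−t) → ⋯ → (k−t,k−t)` in `L(2,k)`. -/
def L2chain (k t s : ℕ) : ℕ × ℕ :=
  if s ≤ k - 2 * t then (t, t + s) else (t + (s - (k - 2 * t)), k - t)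

/-- For `0 ≤ t ≤ ⌊k/2⌋` the sequence `(t,t), (t,t+1), …, (t,k−t), (t+1,k−t), …, (k−t,k−t)`
is a saturated chain in `L(2,k)` whose first and last ranks sum to `2k`. -/
theorem L2chain_saturated_symmetric (k t : ℕ) (ht : t ≤ k / 2) :
    -- every element of the sequence lies in L(2,k)
    (∀ s ≤ 2 * (k - 2 * t), (L2chain k t s).1 ≤ (L2chain k t s).2 ∧ (L2chain k t s).2 ≤ k) ∧
    -- first and last elements are as described
    L2chain k t 0 = (t, t) ∧ L2chain k t (2 * (k - 2 * t)) = (k - t, k - t) ∧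
    -- the chain is increasing and saturated: consecutive ranks differ by 1
    (∀ s < 2 * (k - 2 * t),
      (L2chain k t s).1 ≤ (L2chain k t (s + 1)).1 ∧
      (L2chain k t s).2 ≤ (L2chain k t (s + 1)).2 ∧
      (L2chain k t (s + 1)).1 + (L2chain k t (s + 1)).2
        = (L2chain k t s).1 + (L2chain k t s).2 + 1) ∧
    -- symmetric: ranks of the first and last elements sum to 2k
    ((L2chain k t 0).1 + (L2chain k t 0).2)
      + ((L2chain k t (2 * (k - 2 * t))).1 + (L2chain k t (2 * (k - 2 * t))).2) = 2 * k := by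
  have h2t : 2 * t ≤ k := by omega
  refine ⟨?_, ?_, ?_, ?_, ?_⟩
  · intro s hs
    simp only [L2chain]
    split <;> simp <;> omega
  · simp [L2chain]
  · simp only [L2chain]
    split <;> (ext <;> simp <;> omega)
  · intro s hs
    simp only [L2chain]
    split <;> split <;> simp <;> omega
  · simp only [L2chain]
    split <;> split <;> simp <;> omega
end

section
/- The chains C_t = (t,t) < (t,t+1) < ... < (t,k−t) < (t+1,k−t) < ... < (k−t,k−t), for 0 ≤ t ≤ ⌊k/2⌋, form a partition of L(2,k): every pair (q,p) with 0 ≤ q ≤ p ≤ k lies in exactly one chain C_t. -/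
/-- The chain `C_t` in `L(2,k)`: pairs `(t,s)` for `t ≤ s ≤ k−t` together with pairs
`(s, k−t)` for `t ≤ s ≤ k−t`. -/
def C (k t : ℕ) : Set (ℕ × ℕ) :=
  {x | (x.1 = t ∧ t ≤ x.2 ∧ x.2 ≤ k - t) ∨ (x.2 = k - t ∧ t ≤ x.1 ∧ x.1 ≤ k - t)}

/-- The chains `C_t`, `0 ≤ t ≤ ⌊k/2⌋`, partition `L(2,k)`: every pair `(q,p)` with
`0 ≤ q ≤ p ≤ k` lies in exactly one chain `C_t`. -/
theorem C_partition (k : ℕ) :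
    ∀ q p : ℕ, q ≤ p → p ≤ k → ∃! t : ℕ, t ≤ k / 2 ∧ (q, p) ∈ C k t := by
  intro q p hqp hpk
  refine ⟨min q (k - p), ⟨by omega, ?_⟩, ?_⟩
  · simp only [C, Set.mem_setOf_eq]
    rcases le_or_gt q (k - p) with h | h
    · left; omega
    · right; omega
  · rintro t ⟨ht, h⟩
    simp only [C, Set.mem_setOf_eq] at h
    omega
end
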